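/- Let (V, ω) be a symplectic vector space with odd symplectic form. The bracket {−,−} and cobracket Δ on 𝔥[V] = DR⁰(V) satisfy the involutivity condition: the composite {−,−}∘Δ : 𝔥[V] → 𝔥[V] is the zero map. -/

import Mathlib

noncomputable section

/-!
STATEMENT 11: Let (V, ω) be a symplectic vector space with odd symplectic form.  The
bracket {−,−} and cobracket Δ on 𝔥[V] = DR⁰(V) satisfy the involutivity condition:
the composite {−,−}∘Δ : 𝔥[V] → 𝔥[V] is the zero map.

Coordinates as in the paper: letters `I` with parities `p`, T(V*) = FA I, DR⁰(V) its
quotient by graded commutators (projection π = mkQ (Csub p)), odd pairing ⟨−,−⟩⁻¹ given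
by `c`.  The bracket `brkt` and cobracket `cob` are given on cyclic words by the explicit
formulas of the paper, computed in T(V*); the claim is that applying the bracket to the
two tensor factors of Δ of any cyclic word yields zero in DR⁰(V).
-/


open scoped TensorProduct

/-- The sign (−1)^z for a parity z ∈ ℤ/2. -/
def sgn (z : ZMod 2) : ℚ := (-1 : ℚ) ^ z.val

/-- The free (tensor) algebra T(V*) on the homogeneous coordinates indexed by `I`. -/
abbrev FA (I : Type) := FreeAlgebra ℚ I

/-- The basis of words (noncommutative monomials) of T(V*). -/
def bas (I : Type) : Module.Basis (FreeMonoid I) ℚ (FA I) := FreeAlgebra.basisFreeMonoid ℚ I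

/-- The monomial associated to a word. -/
def mono {I : Type} (w : List I) : FA I := bas I (FreeMonoid.ofList w)

/-- The parity of a word: the sum of the parities of its letters. -/
def wpar {I : Type} (p : I → ZMod 2) (w : List I) : ZMod 2 := (w.map p).sum

/-- Extend a function on words to a linear map on T(V*). -/
def mk1 {I M : Type} [AddCommGroup M] [Module ℚ M] (F : List I → M) : FA I →ₗ[ℚ] M :=
  (bas I).constr ℚ (fun w => F (FreeMonoid.toList w))

/-- Extend a function on pairs of words to a bilinear map on T(V*). -/
def mk2 {I M : Type} [AddCommGroup M] [Module ℚ M] (F : List I → List I → M) :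
    FA I →ₗ[ℚ] FA I →ₗ[ℚ] M :=
  (bas I).constr ℚ (fun w => mk1 (F (FreeMonoid.toList w)))

/-- Delete the i-th letter of a word and rotate the result so that it starts just after
the deleted letter (the effect of the cyclic permutation z_{n−1}^{i−1} in the paper). -/
def cutRot {I : Type} (w : List I) (i : ℕ) : List I := w.drop (i + 1) ++ w.take i

/-- The submodule of graded commutators [T(V*),T(V*)]; the quotient by it is the space
DR⁰(V) of noncommutative 0-forms (cyclic words). -/
def Csub {I : Type} (p : I → ZMod 2) : Submodule ℚ (FA I) :=
  Submodule.span ℚ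
    {x | ∃ u v : List I, x = mono (u ++ v) - sgn (wpar p u * wpar p v) • mono (v ++ u)}

/-- The explicit formula (eqn (bracket) of the paper) for the odd Lie bracket of two
cyclic words, computed in T(V*):
{a₁⋯aₙ, b₁⋯bₘ} = Σᵢⱼ (−1)^p ⟨aᵢ,bⱼ⟩⁻¹ (z^{i−1}·[a₁⋯âᵢ⋯aₙ])(z^{j−1}·[b₁⋯b̂ⱼ⋯bₘ]),
the Koszul signs of the cyclic reorderings included. -/
def brW {I : Type} (p : I → ZMod 2) (c : I → I → ℚ) (w v : List I) : FA I :=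
  ∑ i : Fin w.length, ∑ j : Fin v.length,
    (sgn (p (w.get i) * wpar p (w.take i.val)
          + p (v.get j) * (wpar p w + wpar p (v.take j.val))
          + wpar p (w.take i.val) * wpar p (w.drop (i.val + 1))
          + wpar p (v.take j.val) * wpar p (v.drop (j.val + 1)))
        * c (w.get i) (v.get j))
      • mono (cutRot w i.val ++ cutRot v j.val)

/-- The bracket as a bilinear map on T(V*). -/
def brkt {I : Type} (p : I → ZMod 2) (c : I → I → ℚ) : FA I →ₗ[ℚ] FA I →ₗ[ℚ] FA I :=
  mk2 (brW p c)

/-- The explicit formula (eqn (cobracket) of the paper) for the odd Lie cobracket of a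
cyclic word, computed in T(V*) ⊗ T(V*):
Δ(a₁⋯aₙ) = ½ Σ_{i<j} (−1)^p ⟨aᵢ,aⱼ⟩⁻¹ [1+(12)]·[(a_{i+1}⋯a_{j−1}) ⊗ (a_{j+1}⋯aₙa₁⋯a_{i−1})]. -/
def cobW {I : Type} (p : I → ZMod 2) (c : I → I → ℚ) (w : List I) :
    TensorProduct ℚ (FA I) (FA I) :=
  ∑ i : Fin w.length, ∑ j : Fin w.length,
    if i.val < j.val then
      (let w₁ := (w.drop (i.val + 1)).take (j.val - i.val - 1)
       let w₂ := w.drop (j.val + 1) ++ w.take i.val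
       ((1 : ℚ)/2 * sgn (p (w.get i) * wpar p (w.take (i.val + 1))
              + p (w.get j) * wpar p (w.take (j.val + 1))
              + wpar p (w.take i.val) * (wpar p w₁ + wpar p (w.drop (j.val + 1))))
          * c (w.get i) (w.get j))
        • (mono w₁ ⊗ₜ[ℚ] mono w₂ + sgn (wpar p w₁ * wpar p w₂) • mono w₂ ⊗ₜ[ℚ] mono w₁))
    else 0

/-- The cobracket as a linear map T(V*) → T(V*) ⊗ T(V*). -/
def cob {I : Type} (p : I → ZMod 2) (c : I → I → ℚ) :
    FA I →ₗ[ℚ] TensorProduct ℚ (FA I) (FA I) :=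
  mk1 (cobW p c)

/-!
Expanding first `Δ` and then the bracket, `{−,−} ∘ Δ` of a cyclic word `u` becomes a sum over
pairs of chords of `u`: a chord `(i, j)` contracted by `Δ`, which cuts `u` into the arc inside
and the arc outside it, and a chord `(a, b)` joining these two arcs, contracted by the bracket.
Only interlaced pairs of chords contribute, and exchanging the roles of the two chords of such
a pair gives the same cyclic word with the opposite Koszul sign, because a chord with nonzero
pairing joins letters of opposite parities. So the terms cancel in pairs.
-/

lemma sgn_add (x y : ZMod 2) : sgn (x + y) = sgn x * sgn y := by
  rw [sgn, sgn, sgn, ← pow_add, ZMod.val_add, ← neg_one_pow_eq_pow_mod_two]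

lemma sgn_one : sgn 1 = -1 := by norm_num [sgn, ZMod.val_one]

lemma sgn_add_one (x : ZMod 2) : sgn (x + 1) = -sgn x := by
  rw [sgn_add, sgn_one, mul_neg_one]

lemma zmod_two_eq_add_one_of_ne {a b : ZMod 2} (h : a ≠ b) : b = a + 1 := by
  revert a b; decide

lemma half_sgn_mul_eq_neg (q r : ℚ) {A B C D E : ZMod 2} (h : A + B + C = D + E + 1) :
    1 / 2 * sgn A * q * (sgn B * r) * sgn C = -(1 / 2 * sgn D * r * (sgn E * q)) := by
  have hs : sgn A * sgn B * sgn C = -(sgn D * sgn E) := by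
    rw [← sgn_add, ← sgn_add, h, sgn_add_one, sgn_add]
  linear_combination (1 / 2 * q * r) * hs

lemma half_sgn_mul_sgn_eq_neg (q r : ℚ) {A A' B C D D' E : ZMod 2}
    (h : A + A' + B + C = D + D' + E + 1) :
    1 / 2 * sgn A * q * sgn A' * (sgn B * r) * sgn C =
      -(1 / 2 * sgn D * r * sgn D' * (sgn E * q)) := by
  have hs : sgn A * sgn A' * sgn B * sgn C = -(sgn D * sgn D' * sgn E) := by
    rw [← sgn_add, ← sgn_add, ← sgn_add, h, sgn_add_one, sgn_add, sgn_add]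
  linear_combination (1 / 2 * q * r) * hs

section Words

variable {I : Type} (p : I → ZMod 2) (c : I → I → ℚ)

@[simp] lemma wpar_nil : wpar p ([] : List I) = 0 := rfl

@[simp] lemma wpar_cons (a : I) (x : List I) : wpar p (a :: x) = p a + wpar p x := by
  simp [wpar]

@[simp] lemma wpar_append (x y : List I) : wpar p (x ++ y) = wpar p x + wpar p y := by
  simp [wpar]

lemma mk1_mono {M : Type} [AddCommGroup M] [Module ℚ M] (F : List I → M) (w : List I) :
    mk1 F (mono w) = F w := by
  rw [mk1, mono, Module.Basis.constr_basis, FreeMonoid.toList_ofList]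

lemma mk2_mono {M : Type} [AddCommGroup M] [Module ℚ M] (F : List I → List I → M)
    (w v : List I) : mk2 F (mono w) (mono v) = F w v := by
  rw [mk2, mono, Module.Basis.constr_basis, FreeMonoid.toList_ofList, mk1_mono]

lemma brkt_mono (w v : List I) : brkt p c (mono w) (mono v) = brW p c w v := mk2_mono _ _ _

lemma cob_mono (w : List I) : cob p c (mono w) = cobW p c w := mk1_mono _ _

lemma mkQ_mono_append_comm (x y : List I) :
    (Csub p).mkQ (mono (x ++ y)) = sgn (wpar p x * wpar p y) • (Csub p).mkQ (mono (y ++ x)) := by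
  rw [← sub_eq_zero, ← map_smul, ← map_sub, Submodule.mkQ_apply, Submodule.Quotient.mk_eq_zero]
  exact Submodule.subset_span ⟨x, y, rfl⟩

end Words

section Arcs

variable {I M : Type} [AddCommMonoid M]

lemma sum_getElem_eq_sum_ite (x u : List I) (P : Fin u.length → Prop) [DecidablePred P]
    (pos : Fin u.length → ℕ) (e : Fin x.length → Fin u.length)
    (he : ∀ k, P (e k) ∧ pos (e k) = k ∧ x[(k : ℕ)] = u[(e k : ℕ)])
    (he_surj : ∀ a, P a → ∃ k, e k = a) (F : ℕ → I → M) :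
    ∑ k : Fin x.length, F k x[(k : ℕ)] =
      ∑ a : Fin u.length, if P a then F (pos a) u[(a : ℕ)] else 0 := by
  classical
  have himage : Finset.univ.filter P = Finset.univ.image e := by
    ext a
    simp only [Finset.mem_filter, Finset.mem_univ, true_and, Finset.mem_image]
    exact ⟨he_surj a, fun ⟨k, hk⟩ => hk ▸ (he k).1⟩
  have hinj : Function.Injective e := fun k l hkl =>
    Fin.ext ((he k).2.1.symm.trans ((congrArg pos hkl).trans (he l).2.1))
  rw [← Finset.sum_filter, himage, Finset.sum_image hinj.injOn]
  exact Finset.sum_congr rfl fun k _ => by rw [(he k).2.1, (he k).2.2]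

lemma sum_sum_getElem_eq_sum_sum_ite (x y u : List I) (P Q : Fin u.length → Prop)
    [DecidablePred P] [DecidablePred Q] (posP posQ : Fin u.length → ℕ)
    (hx : ∀ F : ℕ → I → M, ∑ k : Fin x.length, F k x[(k : ℕ)] =
      ∑ a : Fin u.length, if P a then F (posP a) u[(a : ℕ)] else 0)
    (hy : ∀ F : ℕ → I → M, ∑ l : Fin y.length, F l y[(l : ℕ)] =
      ∑ b : Fin u.length, if Q b then F (posQ b) u[(b : ℕ)] else 0)
    (G : ℕ → ℕ → I → I → M) :
    ∑ k : Fin x.length, ∑ l : Fin y.length, G k l x[(k : ℕ)] y[(l : ℕ)] =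
      ∑ a : Fin u.length, ∑ b : Fin u.length,
        if P a ∧ Q b then G (posP a) (posQ b) u[(a : ℕ)] u[(b : ℕ)] else 0 := by
  calc ∑ k : Fin x.length, ∑ l : Fin y.length, G k l x[(k : ℕ)] y[(l : ℕ)]
      = ∑ b : Fin u.length, ∑ k : Fin x.length,
          if Q b then G k (posQ b) x[(k : ℕ)] u[(b : ℕ)] else 0 :=
        (Finset.sum_congr rfl fun (k : Fin x.length) _ =>
          hy fun l yl => G k l x[(k : ℕ)] yl).trans Finset.sum_comm
    _ = ∑ b : Fin u.length, ∑ a : Fin u.length,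
          if P a then (if Q b then G (posP a) (posQ b) u[(a : ℕ)] u[(b : ℕ)] else 0) else 0 :=
        Finset.sum_congr rfl fun b _ =>
          hx fun k xk => if Q b then G k (posQ b) xk u[(b : ℕ)] else 0
    _ = _ := by
        rw [Finset.sum_comm]
        simp_rw [ite_and]

def innerArc (u : List I) (i j : ℕ) : List I := (u.drop (i + 1)).take (j - i - 1)

def outerArc (u : List I) (i j : ℕ) : List I := u.drop (j + 1) ++ u.take i

/-- The position in `outerArc u i j` of the letter at position `b` of `u` (of length `n`). -/
def outerPos (n j b : ℕ) : ℕ := if j < b then b - j - 1 else n - 1 - j + b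

lemma sum_innerArc (u : List I) (i j : Fin u.length) (F : ℕ → I → M) :
    ∑ k : Fin (innerArc u i j).length, F k (innerArc u i j)[(k : ℕ)] =
      ∑ a : Fin u.length,
        if (i : ℕ) < a ∧ (a : ℕ) < j then F (a - i - 1) u[(a : ℕ)] else 0 := by
  have hlen : (innerArc u i j).length = j - i - 1 := by simp [innerArc]; omega
  refine sum_getElem_eq_sum_ite _ _ _ _
    (fun k => ⟨i + 1 + k, by have := k.2.trans_eq hlen; omega⟩) (fun k => ?_) (fun a ha => ?_) F
  · have := k.2.trans_eq hlen
    refine ⟨by simp only; omega, by simp only; omega, ?_⟩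
    simp [innerArc, Nat.add_comm]
  · exact ⟨⟨a - i - 1, by omega⟩, Fin.ext (by simp only; omega)⟩

lemma sum_outerArc (u : List I) (i j : Fin u.length) (hij : i ≤ j) (F : ℕ → I → M) :
    ∑ l : Fin (outerArc u i j).length, F l (outerArc u i j)[(l : ℕ)] =
      ∑ b : Fin u.length,
        if (j : ℕ) < b ∨ (b : ℕ) < i then F (outerPos u.length j b) u[(b : ℕ)] else 0 := by
  have hlen : (outerArc u i j).length = u.length - 1 - j + i := by simp [outerArc]; omega
  refine sum_getElem_eq_sum_ite _ _ _ _
    (fun l => ⟨if l < u.length - 1 - j then j + 1 + l else l - (u.length - 1 - j),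
      by have := l.2.trans_eq hlen; split <;> omega⟩) (fun l => ?_) (fun b hb => ?_) F
  · have := l.2.trans_eq hlen
    refine ⟨by dsimp only; split_ifs <;> omega, by simp only [outerPos]; split_ifs <;> omega, ?_⟩
    simp only [outerArc, List.getElem_append, List.length_drop]
    split_ifs <;>
      first | omega | (simp only [List.getElem_drop, List.getElem_take] <;> congr 1 <;> omega)
  · refine ⟨⟨outerPos u.length j b, by unfold outerPos; split <;> omega⟩, Fin.ext ?_⟩
    simp only [outerPos]
    split_ifs <;> omega

end Arcs

section Terms

variable {I : Type} (p : I → ZMod 2) (c : I → I → ℚ)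

/-- The image in DR⁰(V) of the `(k, l)` summand of `brW p c x y`; the contracted letters
`ax = x[k]` and `ay = y[l]` are separate arguments so that they can be rewritten on their own. -/
def brTerm (ax ay : I) (x y : List I) (k l : ℕ) : FA I ⧸ Csub p :=
  (sgn (p ax * wpar p (x.take k) + p ay * (wpar p x + wpar p (y.take l))
      + wpar p (x.take k) * wpar p (x.drop (k + 1)) + wpar p (y.take l) * wpar p (y.drop (l + 1)))
    * c ax ay) • (Csub p).mkQ (mono (cutRot x k ++ cutRot y l))

/-- The coefficient of the `(i, j)` summand of `cobW p c u`, with `x = u[i]` and `y = u[j]`. -/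
def cobCoeff (u : List I) (x y : I) (i j : ℕ) : ℚ :=
  1 / 2 * sgn (p x * wpar p (u.take (i + 1)) + p y * wpar p (u.take (j + 1))
      + wpar p (u.take i) * (wpar p (innerArc u i j) + wpar p (u.drop (j + 1)))) * c x y

/-- The contribution of the cobracket chord `(i, j)` and the bracket chord `(a, b)` through the
summand `w₁ ⊗ w₂` of `cobW`; `termSnd` is the one through its transpose `w₂ ⊗ w₁`. -/
def termFst (u : List I) (i j a b : Fin u.length) : FA I ⧸ Csub p :=
  if (i : ℕ) < a ∧ (a : ℕ) < j ∧ ((j : ℕ) < b ∨ (b : ℕ) < i) then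
    cobCoeff p c u u[(i : ℕ)] u[(j : ℕ)] i j •
      brTerm p c u[(a : ℕ)] u[(b : ℕ)] (innerArc u i j) (outerArc u i j) (a - i - 1)
        (outerPos u.length j b)
  else 0

def termSnd (u : List I) (i j a b : Fin u.length) : FA I ⧸ Csub p :=
  if (i : ℕ) < b ∧ (b : ℕ) < j ∧ ((j : ℕ) < a ∨ (a : ℕ) < i) then
    (cobCoeff p c u u[(i : ℕ)] u[(j : ℕ)] i j *
        sgn (wpar p (innerArc u i j) * wpar p (outerArc u i j))) •
      brTerm p c u[(a : ℕ)] u[(b : ℕ)] (outerArc u i j) (innerArc u i j)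
        (outerPos u.length j a) (b - i - 1)
  else 0

lemma termFst_eq_zero {u : List I} {i j a b : Fin u.length}
    (h : ¬ ((i : ℕ) < a ∧ (a : ℕ) < j ∧ ((j : ℕ) < b ∨ (b : ℕ) < i))) :
    termFst p c u i j a b = 0 :=
  if_neg h

lemma termSnd_eq_zero {u : List I} {i j a b : Fin u.length}
    (h : ¬ ((i : ℕ) < b ∧ (b : ℕ) < j ∧ ((j : ℕ) < a ∨ (a : ℕ) < i))) :
    termSnd p c u i j a b = 0 :=
  if_neg h

lemma mkQ_brW (x y : List I) :
    (Csub p).mkQ (brW p c x y) =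
      ∑ k : Fin x.length, ∑ l : Fin y.length,
        brTerm p c x[(k : ℕ)] y[(l : ℕ)] x y k l := by
  simp only [brW, map_sum, map_smul, brTerm, List.get_eq_getElem]

lemma sum_termFst (u : List I) (i j : Fin u.length) (hij : i ≤ j) :
    ∑ a : Fin u.length, ∑ b : Fin u.length, termFst p c u i j a b =
      cobCoeff p c u u[(i : ℕ)] u[(j : ℕ)] i j •
        (Csub p).mkQ (brW p c (innerArc u i j) (outerArc u i j)) := by
  rw [mkQ_brW, sum_sum_getElem_eq_sum_sum_ite _ _ u _ _ _ _ (sum_innerArc u i j)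
    (sum_outerArc u i j hij) fun k l ax ay =>
      brTerm p c ax ay (innerArc u i j) (outerArc u i j) k l, Finset.smul_sum]
  refine Finset.sum_congr rfl fun a _ => ?_
  rw [Finset.smul_sum]
  refine Finset.sum_congr rfl fun b _ => ?_
  rw [termFst, smul_ite, smul_zero]
  exact if_congr and_assoc.symm rfl rfl

lemma sum_termSnd (u : List I) (i j : Fin u.length) (hij : i ≤ j) :
    ∑ a : Fin u.length, ∑ b : Fin u.length, termSnd p c u i j a b =
      (cobCoeff p c u u[(i : ℕ)] u[(j : ℕ)] i j *
          sgn (wpar p (innerArc u i j) * wpar p (outerArc u i j))) •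
        (Csub p).mkQ (brW p c (outerArc u i j) (innerArc u i j)) := by
  rw [mkQ_brW, sum_sum_getElem_eq_sum_sum_ite _ _ u _ _ _ _ (sum_outerArc u i j hij)
    (sum_innerArc u i j) fun k l ax ay =>
      brTerm p c ax ay (outerArc u i j) (innerArc u i j) k l, Finset.smul_sum]
  refine Finset.sum_congr rfl fun a _ => ?_
  rw [Finset.smul_sum]
  refine Finset.sum_congr rfl fun b _ => ?_
  rw [termSnd, smul_ite, smul_zero]
  exact if_congr (by tauto) rfl rfl

lemma mkQ_bracket_cob_eq_sum (u : List I) :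
    (Csub p).mkQ (TensorProduct.lift (brkt p c) (cob p c (mono u))) =
      ∑ i : Fin u.length, ∑ j : Fin u.length, ∑ a : Fin u.length, ∑ b : Fin u.length,
        (termFst p c u i j a b + termSnd p c u i j a b) := by
  simp only [cob_mono, cobW, map_sum]
  refine Finset.sum_congr rfl fun i _ => Finset.sum_congr rfl fun j _ => ?_
  simp only [Finset.sum_add_distrib]
  split_ifs with hij
  · rw [sum_termFst p c u i j hij.le, sum_termSnd p c u i j hij.le]
    simp only [map_smul, map_add, TensorProduct.lift.tmul, brkt_mono, smul_add, smul_smul]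
    rfl
  · have hFst (a b) : termFst p c u i j a b = 0 := termFst_eq_zero p c (by omega)
    have hSnd (a b) : termSnd p c u i j a b = 0 := termSnd_eq_zero p c (by omega)
    simp [hFst, hSnd]

end Terms

section Split

variable {I : Type} (p : I → ZMod 2) (c : I → I → ℚ)

lemma take_eq_of_eq_append {u A B : List I} {m : ℕ} (hu : u = A ++ B) (hm : m = A.length) :
    u.take m = A := by
  subst hu hm; exact List.take_left

lemma drop_eq_of_eq_append {u A B : List I} {m : ℕ} (hu : u = A ++ B) (hm : m = A.length) :
    u.drop m = B := by
  subst hu hm; exact List.drop_left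

lemma exists_eq_append_cons (u : List I) {i : ℕ} (h : i < u.length) :
    ∃ A B x, u = A ++ x :: B ∧ A.length = i :=
  ⟨u.take i, u.drop (i + 1), u[i], by rw [List.getElem_cons_drop, List.take_append_drop],
    by simp; omega⟩

lemma exists_eq_append_cons_four (u : List I) {i a j b : ℕ} (hia : i < a) (haj : a < j)
    (hjb : j < b) (hb : b < u.length) :
    ∃ (P X₁ X₂ X₃ X₄ : List I) (x₁ x₂ x₃ x₄ : I),
      u = P ++ x₁ :: X₁ ++ x₂ :: X₂ ++ x₃ :: X₃ ++ x₄ :: X₄ ∧ i = P.length ∧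
        a = i + 1 + X₁.length ∧ j = a + 1 + X₂.length ∧ b = j + 1 + X₃.length := by
  obtain ⟨U₃, X₄, x₄, rfl, hU₃⟩ := exists_eq_append_cons u hb
  obtain ⟨U₂, X₃, x₃, rfl, hU₂⟩ := exists_eq_append_cons U₃ (i := j) (by omega)
  obtain ⟨U₁, X₂, x₂, rfl, hU₁⟩ := exists_eq_append_cons U₂ (i := a) (by simp at hU₃; omega)
  obtain ⟨P, X₁, x₁, rfl, hP⟩ := exists_eq_append_cons U₁ (i := i) (by simp at hU₂; omega)
  refine ⟨P, X₁, X₂, X₃, X₄, x₁, x₂, x₃, x₄, rfl, hP.symm, ?_, ?_, ?_⟩ <;>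
    simp only [List.length_append, List.length_cons] at * <;> omega

lemma getElem_eq_of_eq_append_cons {u A B : List I} {x : I} {i : ℕ} (hu : u = A ++ x :: B)
    (hi : i = A.length) (h : i < u.length) : u[i] = x := by
  subst hu hi; simp

variable {u A X Y : List I} {x y : I} {i j : ℕ}

lemma getElem_left_eq (hu : u = A ++ x :: X ++ y :: Y) (hi : i = A.length)
    (h : i < u.length) : u[i] = x :=
  getElem_eq_of_eq_append_cons (B := X ++ y :: Y) (by simp [hu]) hi h

lemma getElem_right_eq (hu : u = A ++ x :: X ++ y :: Y) (hi : i = A.length)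
    (hj : j = i + 1 + X.length) (h : j < u.length) : u[j] = y :=
  getElem_eq_of_eq_append_cons hu (by simp [hi, hj]; omega) h

lemma innerArc_eq (hu : u = A ++ x :: X ++ y :: Y) (hi : i = A.length)
    (hj : j = i + 1 + X.length) : innerArc u i j = X := by
  rw [innerArc, drop_eq_of_eq_append (A := A ++ [x]) (B := X ++ y :: Y) (by simp [hu])
    (by simp [hi])]
  exact take_eq_of_eq_append rfl (by omega)

lemma outerArc_eq (hu : u = A ++ x :: X ++ y :: Y) (hi : i = A.length)
    (hj : j = i + 1 + X.length) : outerArc u i j = Y ++ A := by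
  rw [outerArc, drop_eq_of_eq_append (A := A ++ x :: X ++ [y]) (B := Y) (by simp [hu])
    (by simp [hi, hj]; omega), take_eq_of_eq_append (B := x :: X ++ y :: Y) (by simp [hu]) hi]

lemma cobCoeff_eq (hu : u = A ++ x :: X ++ y :: Y) (hi : i = A.length)
    (hj : j = i + 1 + X.length) :
    cobCoeff p c u x y i j =
      1 / 2 * sgn (p x * (wpar p A + p x) + p y * (wpar p A + p x + wpar p X + p y)
        + wpar p A * (wpar p X + wpar p Y)) * c x y := by
  rw [cobCoeff, innerArc_eq hu hi hj,
    take_eq_of_eq_append (A := A ++ [x]) (B := X ++ y :: Y) (by simp [hu]) (by simp [hi]),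
    take_eq_of_eq_append (A := A ++ x :: X ++ [y]) (B := Y) (by simp [hu])
      (by simp [hi, hj]; omega),
    take_eq_of_eq_append (B := x :: X ++ y :: Y) (by simp [hu]) hi,
    drop_eq_of_eq_append (A := A ++ x :: X ++ [y]) (B := Y) (by simp [hu])
      (by simp [hi, hj]; omega)]
  simp only [wpar_append, wpar_cons, wpar_nil]
  ring_nf

lemma brTerm_eq {x y X X' Y Y' : List I} {ax ay : I} {k l : ℕ} (hx : x = X ++ ax :: X')
    (hy : y = Y ++ ay :: Y') (hk : k = X.length) (hl : l = Y.length) :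
    brTerm p c ax ay x y k l =
      (sgn (p ax * wpar p X + p ay * (wpar p X + p ax + wpar p X' + wpar p Y)
          + wpar p X * wpar p X' + wpar p Y * wpar p Y') * c ax ay) •
        (Csub p).mkQ (mono (X' ++ X ++ (Y' ++ Y))) := by
  rw [brTerm, cutRot, cutRot, take_eq_of_eq_append (B := ax :: X') hx hk,
    take_eq_of_eq_append (B := ay :: Y') hy hl,
    drop_eq_of_eq_append (A := X ++ [ax]) (B := X') (by simp [hx]) (by simp [hk]),
    drop_eq_of_eq_append (A := Y ++ [ay]) (B := Y') (by simp [hy]) (by simp [hl]), hx]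
  simp only [wpar_append, wpar_cons, add_assoc]

end Split

section Cancel

variable {I : Type} (p : I → ZMod 2) (c : I → I → ℚ)

lemma parity_eq_add_one_of_ne_zero (hodd : ∀ x y, p x = p y → c x y = 0) {x y : I}
    (h : c x y ≠ 0) : p y = p x + 1 :=
  zmod_two_eq_add_one_of_ne fun h' => h (hodd x y h')

lemma termFst_swap (hodd : ∀ x y, p x = p y → c x y = 0) (hsym : ∀ x y, c x y = c y x)
    (u : List I) (i a j b : Fin u.length) (h : (i : ℕ) < a ∧ (a : ℕ) < j ∧ (j : ℕ) < b) :
    termFst p c u a b j i = -termFst p c u i j a b := by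
  obtain ⟨P, X₁, X₂, X₃, X₄, x₁, x₂, x₃, x₄, hu, hi, ha, hj, hb⟩ :=
    exists_eq_append_cons_four u h.1 h.2.1 h.2.2 b.2
  have hu₁ : u = P ++ x₁ :: (X₁ ++ x₂ :: X₂) ++ x₃ :: (X₃ ++ x₄ :: X₄) := by simp [hu]
  have hu₂ : u = (P ++ x₁ :: X₁) ++ x₂ :: (X₂ ++ x₃ :: X₃) ++ x₄ :: X₄ := by simp [hu]
  have hj₁ : (j : ℕ) = i + 1 + (X₁ ++ x₂ :: X₂).length := by simp; omega
  have ha₂ : (a : ℕ) = (P ++ x₁ :: X₁).length := by simp; omega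
  have hb₂ : (b : ℕ) = a + 1 + (X₂ ++ x₃ :: X₃).length := by simp; omega
  have hn : u.length = b + 1 + X₄.length := by simp [hu]; omega
  rw [termFst, termFst, if_pos (by omega), if_pos (by omega),
    getElem_left_eq hu₁ hi, getElem_right_eq hu₁ hi hj₁,
    getElem_left_eq hu₂ ha₂, getElem_right_eq hu₂ ha₂ hb₂,
    cobCoeff_eq p c hu₁ hi hj₁, cobCoeff_eq p c hu₂ ha₂ hb₂,
    innerArc_eq hu₁ hi hj₁, outerArc_eq hu₁ hi hj₁,
    innerArc_eq hu₂ ha₂ hb₂, outerArc_eq hu₂ ha₂ hb₂,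
    brTerm_eq p c (X := X₁) (X' := X₂) (Y := X₃) (Y' := X₄ ++ P) rfl (by simp) (by omega)
      (by rw [outerPos, if_pos (by omega)]; omega),
    brTerm_eq p c (X := X₂) (X' := X₃) (Y := X₄ ++ P) (Y' := X₁) rfl (by simp) (by omega)
      (by rw [outerPos, if_neg (by omega)]; simp; omega)]
  rw [show X₃ ++ X₂ ++ (X₁ ++ (X₄ ++ P)) = X₃ ++ (X₂ ++ X₁ ++ (X₄ ++ P)) by simp,
    mkQ_mono_append_comm, show X₂ ++ X₁ ++ (X₄ ++ P) ++ X₃ = X₂ ++ X₁ ++ (X₄ ++ P ++ X₃) by simp,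
    smul_smul, smul_smul, smul_smul, ← neg_smul, hsym x₃ x₁]
  congr 1
  rcases eq_or_ne (c x₁ x₃) 0 with h₁₃ | h₁₃
  · simp [h₁₃]
  rcases eq_or_ne (c x₂ x₄) 0 with h₂₄ | h₂₄
  · simp [h₂₄]
  refine half_sgn_mul_eq_neg _ _ ?_
  simp only [wpar_append, wpar_cons, parity_eq_add_one_of_ne_zero p c hodd h₁₃,
    parity_eq_add_one_of_ne_zero p c hodd h₂₄]
  generalize p x₁ = e₁, p x₂ = e₂, wpar p P = w₀, wpar p X₁ = w₁, wpar p X₂ = w₂,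
    wpar p X₃ = w₃, wpar p X₄ = w₄
  revert e₁ e₂ w₀ w₁ w₂ w₃ w₄
  decide

lemma termSnd_swap (hodd : ∀ x y, p x = p y → c x y = 0) (hsym : ∀ x y, c x y = c y x)
    (u : List I) (i b j a : Fin u.length) (h : (i : ℕ) < b ∧ (b : ℕ) < j ∧ (j : ℕ) < a) :
    termSnd p c u b a i j = -termSnd p c u i j a b := by
  obtain ⟨P, X₁, X₂, X₃, X₄, x₁, x₂, x₃, x₄, hu, hi, hb, hj, ha⟩ :=
    exists_eq_append_cons_four u h.1 h.2.1 h.2.2 a.2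
  have hu₁ : u = P ++ x₁ :: (X₁ ++ x₂ :: X₂) ++ x₃ :: (X₃ ++ x₄ :: X₄) := by simp [hu]
  have hu₂ : u = (P ++ x₁ :: X₁) ++ x₂ :: (X₂ ++ x₃ :: X₃) ++ x₄ :: X₄ := by simp [hu]
  have hj₁ : (j : ℕ) = i + 1 + (X₁ ++ x₂ :: X₂).length := by simp; omega
  have hb₂ : (b : ℕ) = (P ++ x₁ :: X₁).length := by simp; omega
  have ha₂ : (a : ℕ) = b + 1 + (X₂ ++ x₃ :: X₃).length := by simp; omega
  have hn : u.length = a + 1 + X₄.length := by simp [hu]; omega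
  rw [termSnd, termSnd, if_pos (by omega), if_pos (by omega),
    getElem_left_eq hu₁ hi, getElem_right_eq hu₁ hi hj₁,
    getElem_left_eq hu₂ hb₂, getElem_right_eq hu₂ hb₂ ha₂,
    cobCoeff_eq p c hu₁ hi hj₁, cobCoeff_eq p c hu₂ hb₂ ha₂,
    innerArc_eq hu₁ hi hj₁, outerArc_eq hu₁ hi hj₁,
    innerArc_eq hu₂ hb₂ ha₂, outerArc_eq hu₂ hb₂ ha₂,
    brTerm_eq p c (X := X₃) (X' := X₄ ++ P) (Y := X₁) (Y' := X₂) (by simp) rfl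
      (by rw [outerPos, if_pos (by omega)]; omega) (by omega),
    brTerm_eq p c (X := X₄ ++ P) (X' := X₁) (Y := X₂) (Y' := X₃) (by simp) rfl
      (by rw [outerPos, if_neg (by omega)]; simp; omega) (by omega)]
  rw [show X₁ ++ (X₄ ++ P) ++ (X₃ ++ X₂) = X₁ ++ (X₄ ++ P ++ X₃ ++ X₂) by simp,
    mkQ_mono_append_comm, show X₄ ++ P ++ X₃ ++ X₂ ++ X₁ = X₄ ++ P ++ X₃ ++ (X₂ ++ X₁) by simp,
    smul_smul, smul_smul, smul_smul, ← neg_smul, hsym x₄ x₂]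
  congr 1
  rcases eq_or_ne (c x₁ x₃) 0 with h₁₃ | h₁₃
  · simp [h₁₃]
  rcases eq_or_ne (c x₂ x₄) 0 with h₂₄ | h₂₄
  · simp [h₂₄]
  refine half_sgn_mul_sgn_eq_neg _ _ ?_
  simp only [wpar_append, wpar_cons, parity_eq_add_one_of_ne_zero p c hodd h₁₃,
    parity_eq_add_one_of_ne_zero p c hodd h₂₄]
  generalize p x₁ = e₁, p x₂ = e₂, wpar p P = w₀, wpar p X₁ = w₁, wpar p X₂ = w₂,
    wpar p X₃ = w₃, wpar p X₄ = w₄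
  revert e₁ e₂ w₀ w₁ w₂ w₃ w₄
  decide

end Cancel

section Involution

variable {I : Type} (p : I → ZMod 2) (c : I → I → ℚ)

/-- On interlaced pairs of chords, exchanges the chord contracted by the cobracket with the
one contracted by the bracket, ordered as the matching term of the sum requires. -/
def swapChords {n : ℕ} : Fin n × Fin n × Fin n × Fin n → Fin n × Fin n × Fin n × Fin n
  | (i, j, a, b) =>
    if i < a ∧ a < j ∧ j < b ∨ a < i ∧ i < b ∧ b < j then (a, b, j, i)
    else if b < i ∧ i < a ∧ a < j ∨ i < b ∧ b < j ∧ j < a then (b, a, i, j)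
    else (i, j, a, b)

lemma swapChords_involutive (n : ℕ) : Function.Involutive (swapChords (n := n)) := by
  rintro ⟨i, j, a, b⟩
  simp only [swapChords]
  split_ifs <;> simp_all; omega

def configTerm (u : List I) : Fin u.length × Fin u.length × Fin u.length × Fin u.length →
    FA I ⧸ Csub p
  | (i, j, a, b) => termFst p c u i j a b + termSnd p c u i j a b

lemma configTerm_swapChords (hodd : ∀ x y, p x = p y → c x y = 0)
    (hsym : ∀ x y, c x y = c y x) (u : List I)
    (σ : Fin u.length × Fin u.length × Fin u.length × Fin u.length) :
    configTerm p c u (swapChords σ) = -configTerm p c u σ := by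
  obtain ⟨i, j, a, b⟩ := σ
  simp only [swapChords]
  split_ifs with h₁ h₂ <;> dsimp only [configTerm]
  · rcases h₁ with h | h
    · rw [termFst_swap p c hodd hsym u i a j b (by omega), termSnd_eq_zero p c (by omega),
        termSnd_eq_zero p c (by omega)]
      simp
    · rw [← neg_eq_iff_eq_neg.mpr (termSnd_swap p c hodd hsym u a i b j (by omega)),
        termFst_eq_zero p c (by omega), termFst_eq_zero p c (by omega)]
      simp
  · rcases h₂ with h | h
    · rw [← neg_eq_iff_eq_neg.mpr (termFst_swap p c hodd hsym u b i a j (by omega)),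
        termSnd_eq_zero p c (by omega), termSnd_eq_zero p c (by omega)]
      simp
    · rw [termSnd_swap p c hodd hsym u i b j a (by omega), termFst_eq_zero p c (by omega),
        termFst_eq_zero p c (by omega)]
      simp
  · rw [termFst_eq_zero p c (by omega), termSnd_eq_zero p c (by omega)]
    simp

end Involution

theorem bracket_cobracket_involutive
    (I : Type) (p : I → ZMod 2) (c : I → I → ℚ)
    (hodd : ∀ i j, p i = p j → c i j = 0)
    (hsym : ∀ i j, c i j = c j i) :
    ∀ u : List I,
      (Csub p).mkQ (TensorProduct.lift (brkt p c) (cob p c (mono u))) = 0 := by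
  intro u
  have : IsAddTorsionFree (FA I ⧸ Csub p) := .of_module_rat _
  have hswap := configTerm_swapChords p c hodd hsym u
  have hsum : ∑ σ, configTerm p c u σ = 0 :=
    Finset.sum_ninvolution swapChords (fun σ => by rw [hswap, add_neg_cancel])
      (fun σ hσ hfix => hσ <| self_eq_neg.mp <| by rw [← hswap σ, hfix])
      (fun _ => Finset.mem_univ _) (swapChords_involutive _)
  rw [mkQ_bracket_cob_eq_sum, ← hsum]
  simp only [Fintype.sum_prod_type, configTerm]

end
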